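/- Let U be an open subset of a finite-dimensional real vector space E, g a smooth assignment of a (possibly degenerate) symmetric bilinear form g_p on E to each p ∈ U, X, Y : U → E smooth vector fields, and W : U → E a smooth radical vector field, i.e., g_p(W(p), v) = 0 for every p ∈ U and v ∈ E. Then the Koszul form satisfies K(X, Y, W) = K(Y, X, W) = −K(X, W, Y) = −K(Y, W, X). -/

import Mathlib

variable {E : Type*} [NormedAddCommGroup E] [NormedSpace ℝ E] [FiniteDimensional ℝ E]

/-- The action `(Xf)(p) = df_p(X(p))` of a vector field on a function. -/
noncomputable def vAct (X : E → E) (f : E → ℝ) : E → ℝ := fun p => fderiv ℝ f p (X p)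

/-- The Lie bracket `[X,Y](p) = dY_p(X(p)) − dX_p(Y(p))` of vector fields. -/
noncomputable def vBracket (X Y : E → E) : E → E :=
  fun p => fderiv ℝ Y p (X p) - fderiv ℝ X p (Y p)

/-- The function `p ↦ g_p(Y(p), Z(p))`. -/
noncomputable def gFun (g : E → E →L[ℝ] E →L[ℝ] ℝ) (Y Z : E → E) : E → ℝ := fun p => g p (Y p) (Z p)

/-- The Koszul form
`K(X,Y,Z) := ½{X g(Y,Z) + Y g(Z,X) − Z g(X,Y) − g(X,[Y,Z]) + g(Y,[Z,X]) + g(Z,[X,Y])}`. -/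
noncomputable def koszul (g : E → E →L[ℝ] E →L[ℝ] ℝ) (X Y Z : E → E) : E → ℝ := fun p =>
  (1/2 : ℝ) * (vAct X (gFun g Y Z) p + vAct Y (gFun g Z X) p - vAct Z (gFun g X Y) p
    - gFun g X (vBracket Y Z) p + gFun g Y (vBracket Z X) p + gFun g Z (vBracket X Y) p)

/-!
Every term of `K(X, Y, W)` or `K(X, W, Y)` in which `W` enters `g` directly vanishes: either it
is `g(W, ·)` at `p`, or it differentiates a function `g(W, ·)` that is zero on the open set `U`.
What is left is `½{−W g(X,Y) − g(X,[Y,W]) + g(Y,[W,X])}` and its negative, and this expression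
is symmetric in `X` and `Y` because `g` is symmetric and the bracket antisymmetric.
-/

theorem gFun_comm {g : E → E →L[ℝ] E →L[ℝ] ℝ} (hsymm : ∀ p : E, ∀ u v : E, g p u v = g p v u)
    (X Y : E → E) : gFun g X Y = gFun g Y X :=
  funext fun p => hsymm p _ _

theorem vBracket_apply_swap (X Y : E → E) (p : E) : vBracket Y X p = -vBracket X Y p :=
  (neg_sub _ _).symm

theorem vAct_eq_zero_of_eqOn_zero {U : Set E} (hU : IsOpen U) {p : E} (hp : p ∈ U)
    {f : E → ℝ} (hf : Set.EqOn f 0 U) (X : E → E) : vAct X f p = 0 := by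
  have hf_nhds : f =ᶠ[nhds p] 0 := Filter.eventuallyEq_of_mem (hU.mem_nhds hp) hf
  simp only [vAct, hf_nhds.fderiv_eq, fderiv_zero, Pi.zero_apply, zero_apply]

section Radical

variable {U : Set E} {g : E → E →L[ℝ] E →L[ℝ] ℝ} {W : E → E}

theorem vAct_gFun_radical_left (hU : IsOpen U) (hWrad : ∀ p ∈ U, ∀ v : E, g p (W p) v = 0)
    {p : E} (hp : p ∈ U) (X A : E → E) : vAct X (gFun g W A) p = 0 :=
  vAct_eq_zero_of_eqOn_zero hU hp (fun q hq => hWrad q hq (A q)) X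

theorem vAct_gFun_radical_right (hU : IsOpen U) (hsymm : ∀ p : E, ∀ u v : E, g p u v = g p v u)
    (hWrad : ∀ p ∈ U, ∀ v : E, g p (W p) v = 0) {p : E} (hp : p ∈ U) (X A : E → E) :
    vAct X (gFun g A W) p = 0 := by
  rw [gFun_comm hsymm]
  exact vAct_gFun_radical_left hU hWrad hp X A

theorem koszul_radical_right_comm (hU : IsOpen U) (hsymm : ∀ p : E, ∀ u v : E, g p u v = g p v u)
    (hWrad : ∀ p ∈ U, ∀ v : E, g p (W p) v = 0) {p : E} (hp : p ∈ U) (X Y : E → E) :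
    koszul g Y X W p = koszul g X Y W p := by
  simp only [koszul, vAct_gFun_radical_left hU hWrad hp, vAct_gFun_radical_right hU hsymm hWrad hp,
    gFun_comm hsymm Y X]
  simp only [gFun, hWrad p hp, vBracket_apply_swap W X, vBracket_apply_swap W Y, map_neg]
  ring

theorem koszul_radical_middle (hU : IsOpen U) (hsymm : ∀ p : E, ∀ u v : E, g p u v = g p v u)
    (hWrad : ∀ p ∈ U, ∀ v : E, g p (W p) v = 0) {p : E} (hp : p ∈ U) (X Y : E → E) :
    koszul g X W Y p = -koszul g X Y W p := by
  simp only [koszul, vAct_gFun_radical_left hU hWrad hp, vAct_gFun_radical_right hU hsymm hWrad hp,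
    gFun_comm hsymm Y X]
  simp only [gFun, hWrad p hp, vBracket_apply_swap W Y, vBracket_apply_swap X W, map_neg]
  ring

end Radical

theorem koszul_radical_props_general
    (U : Set E) (hU : IsOpen U)
    (g : E → E →L[ℝ] E →L[ℝ] ℝ)
    (hsymm : ∀ p : E, ∀ u v : E, g p u v = g p v u)
    (X Y W : E → E)
    (hWrad : ∀ p ∈ U, ∀ v : E, g p (W p) v = 0) :
    ∀ p ∈ U, koszul g X Y W p = koszul g Y X W p ∧
      koszul g X Y W p = -koszul g X W Y p ∧
      koszul g X Y W p = -koszul g Y W X p := by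
  intro p hp
  have hcomm := koszul_radical_right_comm hU hsymm hWrad hp X Y
  refine ⟨hcomm.symm, ?_, ?_⟩
  · rw [koszul_radical_middle hU hsymm hWrad hp, neg_neg]
  · rw [koszul_radical_middle hU hsymm hWrad hp, neg_neg, hcomm]

/-- if `W` is a radical vector field (`g_p(W(p), v) = 0` for all
`p ∈ U`, `v ∈ E`), then
`K(X, Y, W) = K(Y, X, W) = −K(X, W, Y) = −K(Y, W, X)` on `U`. -/
theorem koszul_radical_props
    (U : Set E) (hU : IsOpen U)
    (g : E → E →L[ℝ] E →L[ℝ] ℝ) (hg : ContDiffOn ℝ (⊤ : ℕ∞) g U)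
    (hsymm : ∀ p : E, ∀ u v : E, g p u v = g p v u)
    (X Y W : E → E) (hX : ContDiffOn ℝ (⊤ : ℕ∞) X U) (hY : ContDiffOn ℝ (⊤ : ℕ∞) Y U)
    (hW : ContDiffOn ℝ (⊤ : ℕ∞) W U)
    (hWrad : ∀ p ∈ U, ∀ v : E, g p (W p) v = 0) :
    ∀ p ∈ U, koszul g X Y W p = koszul g Y X W p ∧
      koszul g X Y W p = -koszul g X W Y p ∧
      koszul g X Y W p = -koszul g Y W X p :=
  koszul_radical_props_general U hU g hsymm X Y W hWrad
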